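/- In a weighted recursive tree on n nodes with positive weights (w_i), the expected depth of node n equals the sum over i from 1 to n-1 of w_i / (w_1 + ... + w_i). -/

import Mathlib

/-!
Node `m ≥ 2` attaches to `c < m` with probability `w c / S (m - 1)`, where
`S k = w 1 + ⋯ + w k`, and then its depth is one more than the depth of `c`. The depth of `c`
is determined by the parent choices of the nodes `≤ c`, which are independent of the choice made
by `m`; hence `E D_m = ∑_{c < m} w c (1 + E D_c) / S (m - 1)`. Comparing this for `m` and `m + 1`
gives `E D_{m+1} = E D_m + w m / S m`, and `E D_1 = 0`.
-/

open MeasureTheory Finset Filter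

/-- Attachment probability in a weighted recursive tree: node `j` attaches to node `i`. -/
noncomputable def wrtStep (w : ℕ → ℝ) (j i : ℕ) : ℝ :=
  if j ≤ 1 then (if i = 0 then 1 else 0)
  else if 1 ≤ i ∧ i < j then w i / (∑ k ∈ Finset.Icc 1 (j - 1), w k) else 0

/-- The law of a weighted recursive tree on `n` nodes, as a measure on parent functions
`ω : ℕ → ℕ`, where `ω j` is the parent of node `j` (and `ω j = 0` for irrelevant `j`). -/
noncomputable def wrtMeasure (w : ℕ → ℝ) (n : ℕ) : Measure (ℕ → ℕ) :=
  ∑ t : Fin (n + 1) → Fin (n + 1),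
    (ENNReal.ofReal (∏ j : Fin (n + 1), wrtStep w j.val (t j).val)) •
      Measure.dirac (fun j => if h : j < n + 1 then (t ⟨j, h⟩).val else 0)

/-- `i` is an ancestor of `m`: some iterate of the parent map sends `m` to `i`. -/
def isAncestor (ω : ℕ → ℕ) (i m : ℕ) : Prop := ∃ l, 0 < l ∧ ω^[l] m = i

/-- The depth of node `m`: its number of ancestors (nodes on the path from the root to `m`). -/
noncomputable def depth (ω : ℕ → ℕ) (m : ℕ) : ℕ :=
  Set.ncard {i | 1 ≤ i ∧ isAncestor ω i m}

/-- The height of the tree on nodes `1, …, n`: the maximal depth of a node. -/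
noncomputable def height (ω : ℕ → ℕ) (n : ℕ) : ℕ :=
  (Finset.Icc 1 n).sup (fun i => depth ω i)

/-- The number of branches: the number of children of the root. -/
def branches (ω : ℕ → ℕ) (n : ℕ) : ℕ :=
  ((Finset.Icc 2 n).filter (fun j => ω j = 1)).card

open scoped Classical in
/-- The number of leaves: nodes with no children among nodes `1, …, n`. -/
noncomputable def numLeaves (ω : ℕ → ℕ) (n : ℕ) : ℕ :=
  ((Finset.Icc 1 n).filter (fun i => ∀ j ∈ Finset.Icc (i + 1) n, ω j ≠ i)).card

lemma isAncestor_iff (ω : ℕ → ℕ) (i m : ℕ) :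
    isAncestor ω i m ↔ i = ω m ∨ isAncestor ω i (ω m) := by
  constructor
  · rintro ⟨_ | _ | l, hl, he⟩
    · omega
    · exact Or.inl he.symm
    · exact Or.inr ⟨l + 1, l.succ_pos, he⟩
  · rintro (rfl | ⟨l, -, he⟩)
    · exact ⟨1, one_pos, rfl⟩
    · exact ⟨l + 1, l.succ_pos, he⟩

section Ancestors

variable {ω : ℕ → ℕ}

lemma iterate_succ_eq_zero_or_lt (hω : ∀ q, ω q = 0 ∨ ω q < q) (l q : ℕ) :
    ω^[l + 1] q = 0 ∨ ω^[l + 1] q < q := by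
  induction l generalizing q with
  | zero => exact hω q
  | succ l ih =>
    rw [Function.iterate_succ_apply]
    rcases hω q with h | h
    · rcases ih 0 with h' | h' <;> simp_all
    · rcases ih (ω q) with h' | h' <;> omega

lemma lt_of_isAncestor (hω : ∀ q, ω q = 0 ∨ ω q < q) {i c : ℕ} (hi : 0 < i)
    (h : isAncestor ω i c) : i < c := by
  obtain ⟨_ | l, hl, rfl⟩ := h
  · omega
  · rcases iterate_succ_eq_zero_or_lt hω l c with h | h <;> omega

lemma depth_eq_ite (hω : ∀ q, ω q = 0 ∨ ω q < q) (c : ℕ) :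
    depth ω c = if ω c = 0 then 0 else depth ω (ω c) + 1 := by
  have hset : {i | 1 ≤ i ∧ isAncestor ω i c} =
      if ω c = 0 then ∅ else insert (ω c) {i | 1 ≤ i ∧ isAncestor ω i (ω c)} := by
    ext i
    simp only [Set.mem_ofPred_eq, isAncestor_iff ω i c]
    split_ifs with h0
    · simp only [Set.mem_empty_iff_false, iff_false, h0]
      rintro ⟨hi, rfl | ha⟩
      exacts [by omega, absurd (lt_of_isAncestor hω hi ha) (Nat.not_lt_zero i)]
    · simp only [Set.mem_insert_iff, Set.mem_ofPred_eq]
      constructor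
      · rintro ⟨hi, rfl | ha⟩ <;> tauto
      · rintro (rfl | ⟨hi, ha⟩) <;> first | omega | tauto
  unfold depth
  rw [hset]
  split_ifs with h0
  · exact Set.ncard_empty ℕ
  · refine Set.ncard_insert_of_notMem (fun h => ?_) ?_
    · exact lt_irrefl _ (lt_of_isAncestor hω h.1 h.2)
    · exact (Set.finite_Iio (ω c)).subset fun i hi => lt_of_isAncestor hω hi.1 hi.2

end Ancestors

/-- Unlike `depth`, this only reads `ω` on `[0, c]`, whatever `ω` is. -/
def treeDepth (ω : ℕ → ℕ) (c : ℕ) : ℕ :=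
  if h : 0 < ω c ∧ ω c < c then treeDepth ω (ω c) + 1 else 0
termination_by c
decreasing_by exact h.2

lemma treeDepth_of_le_one (ω : ℕ → ℕ) {c : ℕ} (hc : c ≤ 1) : treeDepth ω c = 0 := by
  rw [treeDepth, dif_neg (by omega)]

lemma treeDepth_congr {ω ω' : ℕ → ℕ} {c : ℕ} (h : ∀ q ≤ c, ω q = ω' q) :
    treeDepth ω c = treeDepth ω' c := by
  induction c using Nat.strong_induction_on with
  | _ c ih =>
    rw [treeDepth.eq_def ω c, treeDepth.eq_def ω' c, h c le_rfl]
    split_ifs with hc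
    · rw [ih _ hc.2 fun q hq => h q (by omega)]
    · rfl

lemma depth_eq_treeDepth {ω : ℕ → ℕ} (hω : ∀ q, ω q = 0 ∨ ω q < q) (c : ℕ) :
    depth ω c = treeDepth ω c := by
  induction c using Nat.strong_induction_on with
  | _ c ih =>
    rw [depth_eq_ite hω, treeDepth.eq_def ω c]
    rcases hω c with h | h
    · simp [h]
    · split_ifs with h0 h1 h1
      · omega
      · rfl
      · rw [ih _ h]
      · omega

section ProductWeights

variable {ι α R : Type*} [Fintype ι] [DecidableEq ι] [Fintype α] [DecidableEq α]
  [CommSemiring R]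

lemma sum_filter_apply_eq_eq_of_update {K : (ι → α) → R} {m : ι}
    (hK : ∀ t a, K (Function.update t m a) = K t) (a b : α) :
    ∑ t with t m = a, K t = ∑ t with t m = b, K t :=
  Finset.sum_nbij' (fun t => Function.update t m b) (fun t => Function.update t m a)
    (by simp) (by simp)
    (fun t ht => by simp_all [Function.update_eq_self_iff])
    (fun t ht => by simp_all [Function.update_eq_self_iff])
    (fun t _ => (hK t b).symm)

/-- Conditioning a product-weighted sum on the coordinate `m`. -/
lemma sum_prod_mul_eq_sum_mul_sum_prod_mul (p : ι → α → R) (m : ι) (hp : ∑ a, p m a = 1)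
    (F : α → (ι → α) → R)
    (hF : ∀ a, p m a ≠ 0 → ∀ t b, F a (Function.update t m b) = F a t) :
    ∑ t, (∏ j, p j (t j)) * F (t m) t = ∑ a, p m a * ∑ t, (∏ j, p j (t j)) * F a t := by
  set Q : (ι → α) → R := fun t => ∏ j ∈ Finset.univ.erase m, p j (t j)
  have hQ : ∀ t b, Q (Function.update t m b) = Q t := fun t b =>
    Finset.prod_congr rfl fun j hj => by rw [Function.update_of_ne (Finset.ne_of_mem_erase hj)]
  have hsplit : ∀ (G : (ι → α) → R) (b : α),
      ∑ t with t m = b, (∏ j, p j (t j)) * G t = p m b * ∑ t with t m = b, Q t * G t := by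
    intro G b
    rw [Finset.mul_sum]
    refine Finset.sum_congr rfl fun t ht => ?_
    rw [← Finset.mul_prod_erase _ _ (Finset.mem_univ m), (Finset.mem_filter.mp ht).2, mul_assoc]
  rw [← Finset.sum_fiberwise _ (fun t => t m)]
  refine Finset.sum_congr rfl fun a _ => ?_
  by_cases ha : p m a = 0
  · rw [ha, zero_mul, hsplit, ha, zero_mul]
  have hfib : ∀ b, ∑ t with t m = b, Q t * F a t = ∑ t with t m = a, Q t * F a t :=
    fun b => sum_filter_apply_eq_eq_of_update (K := fun t => Q t * F a t)
      (fun t b => by simp only [hQ, hF a ha]) b a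
  calc ∑ t with t m = a, (∏ j, p j (t j)) * F (t m) t
      = ∑ t with t m = a, (∏ j, p j (t j)) * F a t :=
        Finset.sum_congr rfl fun t ht => by rw [(Finset.mem_filter.mp ht).2]
    _ = p m a * ∑ t with t m = a, Q t * F a t := hsplit _ a
    _ = p m a * ∑ b, p m b * ∑ t with t m = b, Q t * F a t := by
        simp only [hfib, ← Finset.sum_mul, hp, one_mul]
    _ = p m a * ∑ t, (∏ j, p j (t j)) * F a t := by
        simp only [← hsplit, Finset.sum_fiberwise]

end ProductWeights

lemma sum_prod_eq_one {ι α R : Type*} [Fintype ι] [DecidableEq ι] [Fintype α] [CommSemiring R]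
    (p : ι → α → R) (hp : ∀ j, ∑ a, p j a = 1) :
    ∑ t : ι → α, ∏ j, p j (t j) = 1 := by
  rw [← Fintype.prod_sum, Finset.prod_eq_one fun j _ => hp j]

lemma integral_sum_smul_dirac {ι X : Type*} [Fintype ι] [MeasurableSpace X]
    [MeasurableSingletonClass X] (a : ι → ℝ) (ha : ∀ i, 0 ≤ a i) (x : ι → X) (f : X → ℝ) :
    ∫ y, f y ∂(∑ i, ENNReal.ofReal (a i) • Measure.dirac (x i)) = ∑ i, a i * f (x i) := by
  rw [integral_finsetSum_measure fun i _ =>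
    (integrable_dirac enorm_lt_top).smul_measure ENNReal.ofReal_ne_top]
  refine Finset.sum_congr rfl fun i _ => ?_
  rw [integral_smul_measure, integral_dirac, ENNReal.toReal_ofReal (ha i), smul_eq_mul]

section WrtStep

variable {w : ℕ → ℝ}

lemma wrtStep_nonneg (hw : ∀ i, 0 ≤ w i) (j i : ℕ) : 0 ≤ wrtStep w j i := by
  unfold wrtStep
  split_ifs <;> first | exact div_nonneg (hw i) (Finset.sum_nonneg fun k _ => hw k) | norm_num

lemma eq_zero_or_lt_of_wrtStep_ne_zero {j i : ℕ} (h : wrtStep w j i ≠ 0) : i = 0 ∨ i < j := by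
  unfold wrtStep at h
  split_ifs at h <;> first | omega | exact absurd rfl h

lemma pos_and_lt_of_wrtStep_ne_zero {j i : ℕ} (hj : 2 ≤ j) (h : wrtStep w j i ≠ 0) :
    0 < i ∧ i < j := by
  unfold wrtStep at h
  split_ifs at h <;> first | omega | exact absurd rfl h

lemma sum_range_wrtStep_mul {m N : ℕ} (hm : 2 ≤ m) (hmN : m ≤ N) (f : ℕ → ℝ) :
    ∑ c ∈ Finset.range N, wrtStep w m c * f c =
      (∑ c ∈ Finset.Icc 1 (m - 1), w c * f c) / ∑ k ∈ Finset.Icc 1 (m - 1), w k := by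
  have hsub : Finset.Icc 1 (m - 1) ⊆ Finset.range N := fun c hc => by
    simp only [Finset.mem_Icc] at hc
    simp only [Finset.mem_range]
    omega
  rw [← Finset.sum_subset hsub fun c _ hc => by
    simp only [Finset.mem_Icc] at hc
    rw [wrtStep, if_neg (by omega), if_neg (by omega), zero_mul], Finset.sum_div]
  refine Finset.sum_congr rfl fun c hc => ?_
  simp only [Finset.mem_Icc] at hc
  rw [wrtStep, if_neg (by omega), if_pos (by omega)]
  ring

lemma sum_range_wrtStep (hw : ∀ i, 0 < w i) {j N : ℕ} (hj : j < N) :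
    ∑ i ∈ Finset.range N, wrtStep w j i = 1 := by
  rcases le_or_gt j 1 with h1 | h2
  · rw [Finset.sum_eq_single_of_mem 0 (Finset.mem_range.mpr (by omega))
      fun i _ hi => by simp [wrtStep, h1, hi]]
    simp [wrtStep, h1]
  · have hS : 0 < ∑ k ∈ Finset.Icc 1 (j - 1), w k :=
      Finset.sum_pos (fun k _ => hw k) (Finset.nonempty_Icc.mpr (by omega))
    simpa only [mul_one, div_self hS.ne'] using
      sum_range_wrtStep_mul (w := w) h2 hj.le fun _ => (1 : ℝ)

end WrtStep

section Tree

variable {w : ℕ → ℝ} {n : ℕ}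

noncomputable def treeWeight (w : ℕ → ℝ) (n : ℕ) (t : Fin (n + 1) → Fin (n + 1)) : ℝ :=
  ∏ j : Fin (n + 1), wrtStep w j (t j)

def parentFn (n : ℕ) (t : Fin (n + 1) → Fin (n + 1)) : ℕ → ℕ :=
  fun j => if h : j < n + 1 then (t ⟨j, h⟩).val else 0

noncomputable def meanTreeDepth (w : ℕ → ℝ) (n m : ℕ) : ℝ :=
  ∑ t, treeWeight w n t * treeDepth (parentFn n t) m

lemma sum_fin_wrtStep (hw : ∀ i, 0 < w i) {j : ℕ} (hj : j ≤ n) :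
    ∑ a : Fin (n + 1), wrtStep w j a = 1 := by
  rw [Fin.sum_univ_eq_sum_range (wrtStep w j), sum_range_wrtStep hw (by omega)]

lemma sum_treeWeight (hw : ∀ i, 0 < w i) : ∑ t, treeWeight w n t = 1 :=
  sum_prod_eq_one _ fun j => sum_fin_wrtStep hw (Nat.lt_succ_iff.mp j.isLt)

lemma wrtStep_ne_zero_of_treeWeight_ne_zero {t : Fin (n + 1) → Fin (n + 1)}
    (h : treeWeight w n t ≠ 0) (j : Fin (n + 1)) : wrtStep w j (t j) ≠ 0 :=
  fun h0 => h (Finset.prod_eq_zero (Finset.mem_univ j) h0)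

lemma parentFn_eq_zero_or_lt {t : Fin (n + 1) → Fin (n + 1)} (h : treeWeight w n t ≠ 0)
    (q : ℕ) : parentFn n t q = 0 ∨ parentFn n t q < q := by
  unfold parentFn
  split_ifs with hq
  · exact eq_zero_or_lt_of_wrtStep_ne_zero (wrtStep_ne_zero_of_treeWeight_ne_zero h ⟨q, hq⟩)
  · exact Or.inl rfl

lemma treeDepth_parentFn_update (t : Fin (n + 1) → Fin (n + 1)) {m : Fin (n + 1)}
    (a : Fin (n + 1)) {c : ℕ} (hc : c < m) :
    treeDepth (parentFn n (Function.update t m a)) c = treeDepth (parentFn n t) c := by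
  refine treeDepth_congr fun q hq => ?_
  unfold parentFn
  split_ifs with hqn
  · rw [Function.update_of_ne (Fin.ne_of_val_ne (by simp only; omega))]
  · rfl

lemma meanTreeDepth_of_le_one {m : ℕ} (hm : m ≤ 1) : meanTreeDepth w n m = 0 := by
  simp [meanTreeDepth, treeDepth_of_le_one _ hm]

lemma meanTreeDepth_eq_sum (hw : ∀ i, 0 < w i) {m : ℕ} (hm : 2 ≤ m) (hmn : m ≤ n) :
    meanTreeDepth w n m =
      (∑ c ∈ Finset.Icc 1 (m - 1), w c * (1 + meanTreeDepth w n c)) /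
        ∑ k ∈ Finset.Icc 1 (m - 1), w k := by
  set mF : Fin (n + 1) := ⟨m, by omega⟩
  have hrec : ∀ t, treeWeight w n t * treeDepth (parentFn n t) m =
      treeWeight w n t * (1 + treeDepth (parentFn n t) (t mF)) := by
    intro t
    by_cases ht : treeWeight w n t = 0
    · rw [ht, zero_mul, zero_mul]
    have hpar : parentFn n t m = t mF := dif_pos (by omega)
    obtain ⟨hpos, hlt⟩ :=
      pos_and_lt_of_wrtStep_ne_zero hm (wrtStep_ne_zero_of_treeWeight_ne_zero ht mF)
    rw [treeDepth.eq_def _ m, hpar, dif_pos ⟨hpos, hlt⟩]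
    push_cast
    ring
  calc meanTreeDepth w n m
      = ∑ t, treeWeight w n t * (1 + treeDepth (parentFn n t) (t mF)) :=
        Finset.sum_congr rfl fun t _ => hrec t
    _ = ∑ a : Fin (n + 1), wrtStep w m a *
          ∑ t, treeWeight w n t * (1 + treeDepth (parentFn n t) a) :=
        sum_prod_mul_eq_sum_mul_sum_prod_mul (fun j a : Fin (n + 1) => wrtStep w j a) mF
          (sum_fin_wrtStep hw hmn) (fun a t => 1 + (treeDepth (parentFn n t) a : ℝ))
          fun a ha t b => by
            rw [treeDepth_parentFn_update t b (pos_and_lt_of_wrtStep_ne_zero hm ha).2]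
    _ = ∑ a : Fin (n + 1), wrtStep w m a * (1 + meanTreeDepth w n a) := by
        simp only [mul_add, mul_one, Finset.sum_add_distrib, sum_treeWeight hw, meanTreeDepth]
    _ = _ := by
        rw [Fin.sum_univ_eq_sum_range fun c => wrtStep w m c * (1 + meanTreeDepth w n c)]
        exact sum_range_wrtStep_mul hm (by omega) _

end Tree

lemma sum_mul_one_add_sum_div_sum_Icc {w : ℕ → ℝ} (hw : ∀ i, 0 < w i) (k : ℕ) :
    ∑ c ∈ Finset.Icc 1 k,
        w c * (1 + ∑ i ∈ Finset.Icc 1 (c - 1), w i / ∑ j ∈ Finset.Icc 1 i, w j) =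
      (∑ j ∈ Finset.Icc 1 k, w j) * ∑ i ∈ Finset.Icc 1 k, w i / ∑ j ∈ Finset.Icc 1 i, w j := by
  induction k with
  | zero => simp
  | succ k ih =>
    have hS : 0 < ∑ j ∈ Finset.Icc 1 (k + 1), w j :=
      Finset.sum_pos (fun j _ => hw j) (Finset.nonempty_Icc.mpr (by omega))
    rw [Finset.sum_Icc_succ_top (by omega), ih, Nat.add_sub_cancel,
      Finset.sum_Icc_succ_top (by omega : 1 ≤ k + 1) fun i => w i / ∑ j ∈ Finset.Icc 1 i, w j,
      Finset.sum_Icc_succ_top (by omega : 1 ≤ k + 1) w] at *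
    field_simp
    ring

lemma meanTreeDepth_eq {w : ℕ → ℝ} (hw : ∀ i, 0 < w i) {n m : ℕ} (hmn : m ≤ n) :
    meanTreeDepth w n m = ∑ i ∈ Finset.Icc 1 (m - 1), w i / ∑ k ∈ Finset.Icc 1 i, w k := by
  induction m using Nat.strong_induction_on with
  | _ m ih =>
    rcases le_or_gt m 1 with hm | hm
    · simp [meanTreeDepth_of_le_one hm, Nat.sub_eq_zero_of_le hm]
    have hS : 0 < ∑ k ∈ Finset.Icc 1 (m - 1), w k :=
      Finset.sum_pos (fun k _ => hw k) (Finset.nonempty_Icc.mpr (by omega))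
    rw [meanTreeDepth_eq_sum hw hm hmn, div_eq_iff hS.ne', mul_comm,
      ← sum_mul_one_add_sum_div_sum_Icc hw]
    refine Finset.sum_congr rfl fun c hc => ?_
    simp only [Finset.mem_Icc] at hc
    rw [ih c (by omega) (by omega)]

lemma integral_depth_wrtMeasure {w : ℕ → ℝ} (hw : ∀ i, 0 ≤ w i) (n m : ℕ) :
    ∫ ω, (depth ω m : ℝ) ∂(wrtMeasure w n) = meanTreeDepth w n m := by
  rw [wrtMeasure, integral_sum_smul_dirac _ fun t => Finset.prod_nonneg fun j _ =>
    wrtStep_nonneg hw _ _]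
  refine Finset.sum_congr rfl fun t _ => ?_
  change treeWeight w n t * depth (parentFn n t) m = _
  by_cases ht : treeWeight w n t = 0
  · rw [ht, zero_mul, zero_mul]
  · rw [depth_eq_treeDepth (parentFn_eq_zero_or_lt ht)]

theorem expected_depth_general (w : ℕ → ℝ) (hw : ∀ i, 0 < w i) (n : ℕ) :
    ∫ ω, (depth ω n : ℝ) ∂(wrtMeasure w n) =
      ∑ i ∈ Finset.Icc 1 (n - 1), w i / ∑ k ∈ Finset.Icc 1 i, w k := by
  rw [integral_depth_wrtMeasure (fun i => (hw i).le), meanTreeDepth_eq hw le_rfl]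

/-- The expected depth of node `n` equals `∑_{i=1}^{n-1} w i / (w 1 + ⋯ + w i)`. -/
theorem expected_depth (w : ℕ → ℝ) (hw : ∀ i, 0 < w i) (n : ℕ) (hn : 2 ≤ n) :
    ∫ ω, (depth ω n : ℝ) ∂(wrtMeasure w n) =
      ∑ i ∈ Finset.Icc 1 (n - 1), w i / ∑ k ∈ Finset.Icc 1 i, w k :=
  expected_depth_general w hw n
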